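/- In the pure untyped call-by-value probabilistic $\lambda$-calculus $\Lambda_\oplus$, let $L_0=\lambda y.\Omega$ and $L_1=\lambda y.I$, where $\Omega=(\lambda x.xx)(\lambda x.xx)$ and $I=\lambda x.x$. Then for every term $P$ with at most $x$ free: if $P[L_0/x]$ converges with probability at least $p$ (i.e., there is $\mathscr{D}$ with $P[L_0/x]\Rightarrow\mathscr{D}$ and $\sum\mathscr{D}=p$), then there exists $q\ge p$ such that $P[L_1/x]$ converges with probability $q$. -/

import Mathlib

open scoped ENNReal

namespace LamPlus

/-- Terms of the pure untyped probabilistic λ-calculus `Λ⊕` (de Bruijn). -/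
inductive LTm : Type
  | var (n : ℕ)
  | lam (M : LTm)
  | app (M N : LTm)
  | choice (M N : LTm)
deriving DecidableEq

/-- Values of `Λ⊕` (call-by-value): abstractions. -/
inductive IsVal : LTm → Prop
  | lam (M) : IsVal (.lam M)

/-- Substitution of the closed term `s` for the variable `k`. -/
def subst : LTm → ℕ → LTm → LTm
  | .var n, k, s => if n = k then s else if k < n then .var (n - 1) else .var n
  | .lam M, k, s => .lam (subst M (k + 1) s)
  | .app M N, k, s => .app (subst M k s) (subst N k s)
  | .choice M N, k, s => .choice (subst M k s) (subst N k s)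

/-- Simultaneous substitution of a list of closed terms for variables `0, 1, …`. -/
def msubst : LTm → List LTm → LTm
  | M, [] => M
  | M, V :: vs => msubst (subst M 0 V) vs

/-- `P` has all its free variables below `k`. -/
def ClosedUnder : ℕ → LTm → Prop
  | k, .var n => n < k
  | k, .lam M => ClosedUnder (k + 1) M
  | k, .app M N => ClosedUnder k M ∧ ClosedUnder k N
  | k, .choice M N => ClosedUnder k M ∧ ClosedUnder k N

/-- One-step reduction of a closed term to a sequence of terms (probabilistic
branching for `⊕`), closed under call-by-value evaluation contexts. -/
inductive Red : LTm → List LTm → Prop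
  | beta {M V : LTm} : IsVal V → Red (.app (.lam M) V) [subst M 0 V]
  | choice (M N : LTm) : Red (.choice M N) [M, N]
  | appL {M : LTm} {Ns : List LTm} (L : LTm) : Red M Ns →
      Red (.app M L) (Ns.map fun N => .app N L)
  | appR {V M : LTm} {Ns : List LTm} : IsVal V → Red M Ns →
      Red (.app V M) (Ns.map fun N => .app V N)

/-- Small-step approximation semantics `M ⇒ 𝒟` of `Λ⊕`. -/
inductive SEval : LTm → (LTm → ℝ≥0∞) → Prop
  | empty (M) : SEval M 0
  | val {V} : IsVal V → SEval V (fun W => if W = V then 1 else 0)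
  | step {M : LTm} {Ns : List LTm} {D : ℕ → LTm → ℝ≥0∞} : Red M Ns →
      (∀ i : Fin Ns.length, SEval (Ns.get i) (D i)) →
      SEval M (fun b => (Ns.length : ℝ≥0∞)⁻¹ * ∑ i : Fin Ns.length, D i b)

/-- `M` converges with probability `p`: some approximation has total mass `p`. -/
def Conv (M : LTm) (p : ℝ≥0∞) : Prop := ∃ D, SEval M D ∧ (∑' V, D V) = p

/-- The identity `I = λx.x`. -/
def Idt : LTm := .lam (.var 0)

/-- The diverging term `Ω = (λx.xx)(λx.xx)`. -/
def Om : LTm := .app (.lam (.app (.var 0) (.var 0))) (.lam (.app (.var 0) (.var 0)))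

/-- `L₀ = λy.Ω`. -/
def L0 : LTm := .lam Om

/-- `L₁ = λy.I`. -/
def L1 : LTm := .lam Idt

/-- `L = λy.(Ω ⊕ I)`. -/
def Lt : LTm := .lam (.choice Om Idt)

/-- `M = λx.λy.(Ω ⊕ I)`. -/
def Mt : LTm := .lam (.lam (.choice Om Idt))

/-- `N = λx.((λy.Ω) ⊕ (λy.I))`. -/
def Nt : LTm := .lam (.choice (.lam Om) (.lam Idt))

end LamPlus

/-!
`Ω` has no value, and a term of the shape `E[Ω]` (with `E` a call-by-value evaluation context)
only ever reduces to terms of the same shape, so every approximation of it has mass `0`.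
Hence replacing occurrences of `Ω` by arbitrary terms can only increase convergence
probabilities: this replacement relation is a simulation, where each step of the left term is
either stuck on `Ω` or matched by a step of the right term with related successors.
`P[L₀/x]` and `P[L₁/x]` are related by it, since `L₀ = λy.Ω` and `L₁ = λy.I`.
-/

namespace LamPlus

/-- `OmRefines M M'`: `M'` is obtained from `M` by replacing some occurrences of `Ω`. -/
inductive OmRefines : LTm → LTm → Prop
  | var (n : ℕ) : OmRefines (.var n) (.var n)
  | om (M' : LTm) : OmRefines Om M'
  | lam {A A' : LTm} : OmRefines A A' → OmRefines (.lam A) (.lam A')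
  | app {A A' B B' : LTm} : OmRefines A A' → OmRefines B B' → OmRefines (.app A B) (.app A' B')
  | choice {A A' B B' : LTm} :
      OmRefines A A' → OmRefines B B' → OmRefines (.choice A B) (.choice A' B')

/-- Terms `E[Ω]` for a call-by-value evaluation context `E`. -/
inductive OmStuck : LTm → Prop
  | om : OmStuck Om
  | appL {M : LTm} (L : LTm) : OmStuck M → OmStuck (.app M L)
  | appR {V M : LTm} : IsVal V → OmStuck M → OmStuck (.app V M)

lemma subst_Om (k : ℕ) (V : LTm) : subst Om k V = Om := by
  simp [Om, subst]

lemma not_red_lam {A : LTm} {Ns : List LTm} : ¬ Red (.lam A) Ns := nofun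

lemma red_Om {Ns : List LTm} (h : Red Om Ns) : Ns = [Om] := by
  cases h with
  | beta _ => simp [subst, Om]
  | appL _ h => exact absurd h not_red_lam
  | appR _ h => exact absurd h not_red_lam

lemma OmStuck.not_isVal {M : LTm} (h : OmStuck M) : ¬ IsVal M := by
  cases h <;> nofun

lemma OmStuck.of_red {M : LTm} {Ns : List LTm} (hM : OmStuck M) (hr : Red M Ns) :
    ∀ N ∈ Ns, OmStuck N := by
  induction hM generalizing Ns with
  | om => simp [red_Om hr, OmStuck.om]
  | appL L hM ih =>
    cases hr with
    | beta hV => cases hM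
    | appL _ h => simpa using fun N hN => OmStuck.appL L (ih h N hN)
    | appR hV _ => exact absurd hV hM.not_isVal
  | appR hV hM ih =>
    cases hr with
    | beta hV' => exact absurd hV' hM.not_isVal
    | appL _ h => cases hV; exact absurd h not_red_lam
    | appR _ h => simpa using fun N hN => OmStuck.appR hV (ih h N hN)

namespace OmRefines

lemma refl : ∀ M : LTm, OmRefines M M
  | .var n => .var n
  | .lam M => .lam (refl M)
  | .app M N => .app (refl M) (refl N)
  | .choice M N => .choice (refl M) (refl N)

lemma subst {M M' V V' : LTm} (hM : OmRefines M M') (hV : OmRefines V V') (k : ℕ) :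
    OmRefines (LamPlus.subst M k V) (LamPlus.subst M' k V') := by
  induction hM generalizing k with
  | var n => simp only [LamPlus.subst]; split_ifs <;> first | exact hV | exact refl _
  | om M' => rw [subst_Om]; exact .om _
  | lam _ ih => exact .lam (ih (k + 1))
  | app _ _ ih₁ ih₂ => exact .app (ih₁ k) (ih₂ k)
  | choice _ _ ih₁ ih₂ => exact .choice (ih₁ k) (ih₂ k)

lemma isVal {V V' : LTm} (h : OmRefines V V') (hV : IsVal V) : IsVal V' := by
  cases h with
  | lam _ => exact .lam _
  | _ => cases hV

lemma red {M M' : LTm} {Ns : List LTm} (h : OmRefines M M') (hr : Red M Ns) :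
    OmStuck M ∨ ∃ Ns', Red M' Ns' ∧ List.Forall₂ OmRefines Ns Ns' := by
  induction h generalizing Ns with
  | var n => cases hr
  | om M' => exact .inl .om
  | lam _ _ => cases hr
  | app hA hB ihA ihB =>
    cases hr with
    | beta hV =>
      cases hA with
      | lam hA₀ => exact .inr ⟨_, .beta (hB.isVal hV), .cons (hA₀.subst hB 0) .nil⟩
    | appL L h =>
      rcases ihA h with hst | ⟨Ns', hr', hf⟩
      · exact .inl (.appL _ hst)
      · exact .inr ⟨_, .appL _ hr', List.rel_map (fun _ _ h => OmRefines.app h hB) hf⟩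
    | appR hV h =>
      rcases ihB h with hst | ⟨Ns', hr', hf⟩
      · exact .inl (.appR hV hst)
      · exact .inr ⟨_, .appR (hA.isVal hV) hr',
          List.rel_map (fun _ _ h => OmRefines.app hA h) hf⟩
  | choice hA hB _ _ =>
    cases hr with
    | choice => exact .inr ⟨_, .choice _ _, .cons hA (.cons hB .nil)⟩

end OmRefines

lemma tsum_inv_mul_sum {α : Type*} (n : ℕ) (D : ℕ → α → ℝ≥0∞) :
    ∑' b, ((n : ℝ≥0∞)⁻¹ * ∑ i : Fin n, D i b) = (n : ℝ≥0∞)⁻¹ * ∑ i : Fin n, ∑' b, D i b := by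
  rw [ENNReal.tsum_mul_left, Summable.tsum_finsetSum fun i _ => ENNReal.summable]

lemma SEval.tsum_eq_zero_of_omStuck {M : LTm} {D : LTm → ℝ≥0∞} (h : SEval M D)
    (hM : OmStuck M) : ∑' b, D b = 0 := by
  induction h with
  | empty M => simp
  | val hV => exact absurd hV hM.not_isVal
  | step hr _ ih =>
    rw [tsum_inv_mul_sum, Finset.sum_eq_zero fun i _ => ih i (hM.of_red hr _ (List.get_mem _ _)),
      mul_zero]

lemma SEval.exists_of_red {M : LTm} {Ns : List LTm} (hr : Red M Ns) (p : ℕ → ℝ≥0∞)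
    (h : ∀ i : Fin Ns.length, ∃ E, SEval (Ns.get i) E ∧ p i ≤ ∑' b, E b) :
    ∃ D, SEval M D ∧ (Ns.length : ℝ≥0∞)⁻¹ * ∑ i : Fin Ns.length, p i ≤ ∑' b, D b := by
  choose E hE hp using h
  refine ⟨_, .step (D := fun n => if h : n < Ns.length then E ⟨n, h⟩ else 0) hr
    fun i => by simpa using hE i, ?_⟩
  rw [tsum_inv_mul_sum _ fun n => if h : n < Ns.length then E ⟨n, h⟩ else 0]
  gcongr with i
  simpa using hp i

lemma SEval.exists_of_omRefines {M M' : LTm} {D : LTm → ℝ≥0∞} (h : SEval M D)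
    (hM : OmRefines M M') : ∃ D', SEval M' D' ∧ ∑' b, D b ≤ ∑' b, D' b := by
  induction h generalizing M' with
  | empty M => exact ⟨0, .empty M', by simp⟩
  | val hV => exact ⟨_, .val (hM.isVal hV), by rw [tsum_ite_eq, tsum_ite_eq]⟩
  | @step M Ns D hr hsub ih =>
    rcases hM.red hr with hst | ⟨Ns', hr', hf⟩
    · exact ⟨0, .empty M', by simp [(SEval.step hr hsub).tsum_eq_zero_of_omStuck hst]⟩
    · have hlen := hf.length_eq
      rw [tsum_inv_mul_sum, hlen]
      exact SEval.exists_of_red hr' (fun i => ∑' b, D i b) fun j =>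
        ih ⟨j, by omega⟩ (hf.get (by omega) j.isLt)

theorem stmt18_general (P : LTm) (p : ℝ≥0∞)
    (h : Conv (subst P 0 L0) p) :
    ∃ q, p ≤ q ∧ Conv (subst P 0 L1) q := by
  obtain ⟨D, hD, rfl⟩ := h
  have hL : OmRefines L0 L1 := .lam (.om Idt)
  obtain ⟨D', hD', hle⟩ := hD.exists_of_omRefines ((OmRefines.refl P).subst hL 0)
  exact ⟨_, hle, D', hD', rfl⟩

/-- for any term `P` with at most the variable `x` free, if `P[L₀/x]`
converges with probability `p`, then `P[L₁/x]` converges with some probability `q ≥ p`. -/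
theorem stmt18 (P : LTm) (hP : ClosedUnder 1 P) (p : ℝ≥0∞)
    (h : Conv (subst P 0 L0) p) :
    ∃ q, p ≤ q ∧ Conv (subst P 0 L1) q :=
  stmt18_general P p h

end LamPlus
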